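/- Let n ≥ 2. The largest eigenvalue of the adjacency matrix of the Dynkin diagram D_{2n} (which has 2n vertices) is 2·cos(π/(4n-2)). -/

import Mathlib

/-
The vector `w` with entries `sin ((k + 1) π / (4n - 2))` along the path of `D_{2n}` and `1 / 2`
on the two leaves is a positive eigenvector of the adjacency matrix with eigenvalue
`2 cos (π / (4n - 2))`, by the identity `sin (x - y) + sin (x + y) = 2 sin x cos y`.
For a nonnegative matrix, an eigenvalue with a positive eigenvector bounds every real eigenvalue
`μ` in absolute value: at a coordinate `i` maximising `|v j| / w j`, the equation `A v = μ v`
gives `|μ| |v i| ≤ ∑ j, A i j |v j| ≤ (|v i| / w i) ∑ j, A i j w j = r |v i|`.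
-/

/-- The adjacency matrix of the Dynkin diagram `D_{2n}`: vertices `0, …, 2n-3` form a path,
and vertices `2n-2` and `2n-1` are each joined to vertex `2n-3`. -/
def D2nAdj (n : ℕ) : Matrix (Fin (2 * n)) (Fin (2 * n)) ℝ := fun i j =>
  if (i.val + 1 = j.val ∧ j.val ≤ 2 * n - 3) ∨ (j.val + 1 = i.val ∧ i.val ≤ 2 * n - 3) ∨
     (i.val = 2 * n - 3 ∧ 2 * n - 2 ≤ j.val) ∨ (j.val = 2 * n - 3 ∧ 2 * n - 2 ≤ i.val)
  then 1 else 0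

open Finset Real Matrix

theorem Matrix.abs_le_of_mulVec_eq_smul_of_pos {ι K : Type*} [Fintype ι] [Field K] [LinearOrder K]
    [IsStrictOrderedRing K] {A : Matrix ι ι K} (hA : ∀ i j, 0 ≤ A i j) {w : ι → K}
    (hw : ∀ i, 0 < w i) {r : K} (hAw : A *ᵥ w = r • w) {v : ι → K} (hv : v ≠ 0) {μ : K}
    (hAv : A *ᵥ v = μ • v) : |μ| ≤ r := by
  obtain ⟨i₀, -⟩ := Function.ne_iff.mp hv
  obtain ⟨i, -, hi⟩ := exists_max_image univ (fun j => |v j| / w j) ⟨i₀, mem_univ _⟩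
  set c := |v i| / w i
  have hvc : ∀ j, |v j| ≤ c * w j := fun j => (div_le_iff₀ (hw j)).mp (hi j (mem_univ j))
  have hvi : v i ≠ 0 := by
    intro h0
    refine hv (funext fun j => abs_nonpos_iff.mp ?_)
    simpa [c, h0] using hvc j
  have key : |μ| * |v i| ≤ r * |v i| := calc
    |μ| * |v i| = |∑ j, A i j * v j| := by
        rw [← abs_mul, ← smul_eq_mul, ← Pi.smul_apply, ← hAv]; rfl
    _ ≤ ∑ j, A i j * |v j| := by
        simpa only [abs_mul, abs_of_nonneg (hA i _)] using
          abs_sum_le_sum_abs (fun j => A i j * v j) univ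
    _ ≤ ∑ j, A i j * (c * w j) :=
        sum_le_sum fun j _ => mul_le_mul_of_nonneg_left (hvc j) (hA i j)
    _ = c * (A *ᵥ w) i := by
        simp only [mulVec, dotProduct, mul_sum]; exact sum_congr rfl fun j _ => by ring
    _ = r * |v i| := by
        rw [hAw, Pi.smul_apply, smul_eq_mul, mul_left_comm, div_mul_cancel₀ _ (hw i).ne']
  exact le_of_mul_le_mul_right key (abs_pos.mpr hvi)

theorem Matrix.mulVec_apply_of_row_eq_indicator {m n R : Type*} [Fintype n] [DecidableEq n]
    [NonAssocSemiring R] {M : Matrix m n R} {i : m} {s : Finset n}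
    (h : ∀ j, M i j = if j ∈ s then 1 else 0) (v : n → R) : (M *ᵥ v) i = ∑ j ∈ s, v j := by
  simp only [mulVec, dotProduct, h, ite_mul, one_mul, zero_mul, sum_ite_mem, univ_inter]

theorem D2nAdj_mulVec_apply_zero {n : ℕ} (hn : 2 ≤ n) (v : Fin (2 * n) → ℝ) (h : 0 < 2 * n) :
    (D2nAdj n *ᵥ v) ⟨0, h⟩ = v ⟨1, by omega⟩ := by
  rw [mulVec_apply_of_row_eq_indicator (s := {⟨1, by omega⟩}), sum_singleton]
  intro j
  unfold D2nAdj
  congr 1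
  simp only [mem_singleton, Fin.ext_iff, eq_iff_iff]
  omega

theorem D2nAdj_mulVec_apply_interior {n k : ℕ} (v : Fin (2 * n) → ℝ) (hk : k < 2 * n)
    (hk₁ : 1 ≤ k) (hk₂ : k ≤ 2 * n - 4) :
    (D2nAdj n *ᵥ v) ⟨k, hk⟩ = v ⟨k - 1, by omega⟩ + v ⟨k + 1, by omega⟩ := by
  rw [mulVec_apply_of_row_eq_indicator (s := {⟨k - 1, by omega⟩, ⟨k + 1, by omega⟩}),
    sum_pair (by simp only [ne_eq, Fin.ext_iff]; omega)]
  intro j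
  unfold D2nAdj
  congr 1
  simp only [mem_insert, mem_singleton, Fin.ext_iff, eq_iff_iff]
  omega

theorem D2nAdj_mulVec_apply_branch {n : ℕ} (hn : 2 ≤ n) (v : Fin (2 * n) → ℝ)
    (h : 2 * n - 3 < 2 * n) :
    (D2nAdj n *ᵥ v) ⟨2 * n - 3, h⟩ = v ⟨2 * n - 4, by omega⟩ + v ⟨2 * n - 2, by omega⟩ +
      v ⟨2 * n - 1, by omega⟩ := by
  rw [mulVec_apply_of_row_eq_indicator
      (s := {⟨2 * n - 4, by omega⟩, ⟨2 * n - 2, by omega⟩, ⟨2 * n - 1, by omega⟩}),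
    sum_insert (by simp only [mem_insert, mem_singleton, Fin.ext_iff]; omega),
    sum_pair (by simp only [ne_eq, Fin.ext_iff]; omega), add_assoc]
  intro j
  unfold D2nAdj
  congr 1
  simp only [mem_insert, mem_singleton, Fin.ext_iff, eq_iff_iff, le_refl, true_and, and_true]
  omega

theorem D2nAdj_mulVec_apply_leaf {n k : ℕ} (hn : 2 ≤ n) (v : Fin (2 * n) → ℝ)
    (hk : k < 2 * n) (hk₂ : 2 * n - 2 ≤ k) :
    (D2nAdj n *ᵥ v) ⟨k, hk⟩ = v ⟨2 * n - 3, by omega⟩ := by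
  rw [mulVec_apply_of_row_eq_indicator (s := {⟨2 * n - 3, by omega⟩}), sum_singleton]
  intro j
  unfold D2nAdj
  congr 1
  simp only [mem_singleton, Fin.ext_iff, eq_iff_iff]
  omega

theorem D2nAdj_nonneg (n : ℕ) (i j : Fin (2 * n)) : 0 ≤ D2nAdj n i j := by
  unfold D2nAdj; split_ifs <;> norm_num

-- `4n - 2` is the Coxeter number of `D_{2n}`.
noncomputable def D2nAngle (n : ℕ) : ℝ := π / (4 * n - 2)

theorem two_mul_sub_one_mul_D2nAngle (n : ℕ) : (2 * n - 1 : ℝ) * D2nAngle n = π / 2 := by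
  have : (4 * n - 2 : ℝ) ≠ 0 := by
    intro h
    have : (n : ℝ) * 4 = 2 := by linarith
    norm_cast at this; omega
  rw [D2nAngle, mul_div_assoc', div_eq_iff this]; ring

theorem D2nAngle_pos {n : ℕ} (hn : 1 ≤ n) : 0 < D2nAngle n := by
  have hn' : (1 : ℝ) ≤ n := by exact_mod_cast hn
  exact div_pos pi_pos (by linarith)

/- The Perron vector `k ↦ sin ((k + 1) π / (4n - 2))` of the path `A_{4n-3}` is symmetric about
its middle vertex, where it equals `1`; folding the path in half and splitting that vertex into the
two leaves of `D_{2n}`, each carrying weight `1 / 2`, gives an eigenvector of `D_{2n}`. -/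
noncomputable def D2nPerronVec (n : ℕ) : Fin (2 * n) → ℝ := fun i =>
  if i.val ≤ 2 * n - 3 then sin ((i.val + 1) * D2nAngle n) else 1 / 2

theorem D2nPerronVec_mk_of_le {n k : ℕ} (hk : k ≤ 2 * n - 3) (hkn : k < 2 * n) :
    D2nPerronVec n ⟨k, hkn⟩ = sin ((k + 1) * D2nAngle n) :=
  if_pos hk

theorem D2nPerronVec_mk_of_lt {n k : ℕ} (hk : 2 * n - 3 < k) (hkn : k < 2 * n) :
    D2nPerronVec n ⟨k, hkn⟩ = 1 / 2 :=
  if_neg hk.not_ge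

theorem D2nPerronVec_pos {n : ℕ} (hn : 2 ≤ n) (i : Fin (2 * n)) : 0 < D2nPerronVec n i := by
  unfold D2nPerronVec
  split_ifs with hi
  · have hi' : (i.val + 3 : ℝ) ≤ 2 * n := by exact_mod_cast (by omega : i.val + 3 ≤ 2 * n)
    have hθ := D2nAngle_pos (by omega : 1 ≤ n)
    apply sin_pos_of_pos_of_lt_pi (by positivity)
    nlinarith [two_mul_sub_one_mul_D2nAngle n, pi_pos]
  · norm_num

theorem D2nAdj_mulVec_perronVec {n : ℕ} (hn : 2 ≤ n) :
    D2nAdj n *ᵥ D2nPerronVec n = (2 * cos (D2nAngle n)) • D2nPerronVec n := by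
  have hθ : (2 * n - 1 : ℝ) * D2nAngle n = π / 2 := two_mul_sub_one_mul_D2nAngle n
  have hcast : ((2 * n - 3 : ℕ) : ℝ) + 1 = 2 * n - 2 := by
    push_cast [Nat.cast_sub (by omega : 3 ≤ 2 * n)]; ring
  have hsin : sin ((2 * n - 2 : ℝ) * D2nAngle n) = cos (D2nAngle n) := by
    rw [show (2 * n - 2 : ℝ) * D2nAngle n = π / 2 - D2nAngle n by linear_combination hθ,
      sin_pi_div_two_sub]
  funext ⟨k, hk⟩
  rw [Pi.smul_apply, smul_eq_mul]
  obtain rfl | ⟨hk₁, hk₂⟩ | rfl | hk₂ :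
      k = 0 ∨ (1 ≤ k ∧ k ≤ 2 * n - 4) ∨ k = 2 * n - 3 ∨ 2 * n - 2 ≤ k := by
    omega
  · rw [D2nAdj_mulVec_apply_zero hn, D2nPerronVec_mk_of_le (by omega),
      D2nPerronVec_mk_of_le (by omega)]
    norm_num [sin_two_mul]
    ring
  · rw [D2nAdj_mulVec_apply_interior _ hk hk₁ hk₂, D2nPerronVec_mk_of_le (by omega),
      D2nPerronVec_mk_of_le (by omega), D2nPerronVec_mk_of_le (by omega)]
    push_cast [Nat.cast_sub hk₁]
    rw [show ((k : ℝ) - 1 + 1) * D2nAngle n = (k + 1) * D2nAngle n - D2nAngle n by ring,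
      show ((k : ℝ) + 1 + 1) * D2nAngle n = (k + 1) * D2nAngle n + D2nAngle n by ring,
      ← two_mul_sin_mul_cos]
    ring
  · rw [D2nAdj_mulVec_apply_branch hn, D2nPerronVec_mk_of_le (by omega),
      D2nPerronVec_mk_of_lt (by omega), D2nPerronVec_mk_of_lt (by omega),
      D2nPerronVec_mk_of_le le_rfl, hcast, hsin]
    push_cast [Nat.cast_sub (by omega : 4 ≤ 2 * n)]
    rw [show (2 * n - 4 + 1 : ℝ) * D2nAngle n = π / 2 - 2 * D2nAngle n by
        linear_combination hθ, sin_pi_div_two_sub, cos_two_mul]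
    ring
  · rw [D2nAdj_mulVec_apply_leaf hn _ hk hk₂, D2nPerronVec_mk_of_le le_rfl,
      D2nPerronVec_mk_of_lt (by omega), hcast, hsin]
    ring

theorem stmt_13 (n : ℕ) (hn : 2 ≤ n) :
    IsGreatest {μ : ℝ | ∃ v : Fin (2 * n) → ℝ, v ≠ 0 ∧ (D2nAdj n).mulVec v = μ • v}
      (2 * Real.cos (Real.pi / (4 * n - 2))) := by
  have hw := D2nPerronVec_pos hn
  have hAw := D2nAdj_mulVec_perronVec hn
  refine ⟨⟨D2nPerronVec n, fun h => (hw ⟨0, by omega⟩).ne' (congrFun h _), hAw⟩, ?_⟩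
  rintro μ ⟨v, hv, hAv⟩
  exact (le_abs_self μ).trans (abs_le_of_mulVec_eq_smul_of_pos (D2nAdj_nonneg n) hw hAw hv hAv)
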